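/- arXiv:2208.12357 — 2 statements merged into one kernel-verified Lean document; each statement's English description precedes it below -/
import Mathlib

section
/- Let A be an invertible m×m real matrix, A_s a p×p real matrix, G a p×m real matrix, B a q×p real matrix, and suppose S₁ = A_s + G A⁻¹ Gᵀ and S₂ = B S₁⁻¹ Bᵀ are invertible (so q ≤ p). Define the block lower-triangular preconditioner M̃₃ = [[A, 0, 0], [G, S₁, 0], [0, B, S₂]]. Then the characteristic polynomial of M̃₃⁻¹K is det(λI − M̃₃⁻¹K) = (λ − 1)^m · (λ + 1)^{p−q} · ((λ + 1)² − 2)^q; equivalently, the eigenvalues of M̃₃⁻¹K are 1 with algebraic multiplicity m, −1 with algebraic multiplicity p − q, and √2 − 1 and −√2 − 1 each with algebraic multiplicity q. -/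
open Matrix Polynomial

/-- Assemble a 3×3 block matrix from its nine blocks. -/
noncomputable def blk3 {m p q : Type*}
    (M11 : Matrix m m ℝ) (M12 : Matrix m p ℝ) (M13 : Matrix m q ℝ)
    (M21 : Matrix p m ℝ) (M22 : Matrix p p ℝ) (M23 : Matrix p q ℝ)
    (M31 : Matrix q m ℝ) (M32 : Matrix q p ℝ) (M33 : Matrix q q ℝ) :
    Matrix (m ⊕ (p ⊕ q)) (m ⊕ (p ⊕ q)) ℝ :=
  Matrix.fromBlocks M11 (Matrix.fromCols M12 M13)
    (Matrix.fromRows M21 M31) (Matrix.fromBlocks M22 M23 M32 M33)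

/-!
Block forward substitution factors the double saddle-point matrix as `K = M̃₃ T` with
`T = [[1, A⁻¹Gᵀ, 0], [0, -1, S₁⁻¹Bᵀ], [0, 2 S₂⁻¹B, -1]]`, so `M̃₃⁻¹K = T` is block upper
triangular: its first diagonal block `1` contributes `(λ - 1)^m`. The remaining block
`[[-1, C], [D, -1]]` has `D C = 2` (this is `S₂⁻¹ S₂ = 1`). Multiplying `λI - [[-1, C], [D, -1]]` on
the right by `[[1, C], [0, λ + 1]]` makes it block lower triangular with diagonal blocks
`(λ + 1)I_p` and `(λ + 1)² - D C = ((λ + 1)² - 2) I_q`, and cancelling the factor `(λ + 1)^q` of the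
multiplier leaves `(λ + 1)^(p-q) ((λ + 1)² - 2)^q`; here `q ≤ p` because `S₂ = B S₁⁻¹ Bᵀ` is
invertible.
-/

section

variable {p q R : Type*} [Fintype p] [Fintype q] [DecidableEq p] [DecidableEq q] [CommRing R]

theorem det_fromBlocks_smul_one_mul_pow (a : R) (C : Matrix p q R) (D : Matrix q p R) :
    det (fromBlocks (a • 1) C D (a • 1)) * a ^ Fintype.card q =
      a ^ Fintype.card p * det (a ^ 2 • 1 - D * C) := by
  have hfactor : fromBlocks (a • 1) C D (a • 1) * fromBlocks 1 (-C) 0 (a • 1) =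
      fromBlocks (a • 1) 0 D (a ^ 2 • 1 - D * C) := by
    simp [fromBlocks_multiply, pow_two, mul_smul, sub_eq_neg_add]
  have := congrArg det hfactor
  rwa [det_mul, det_fromBlocks_zero₂₁, det_fromBlocks_zero₁₂, det_one, one_mul,
    det_smul_of_tower, det_smul_of_tower, det_one, det_one, smul_eq_mul, smul_eq_mul,
    mul_one, mul_one] at this

theorem charmatrix_neg_one : charmatrix (-1 : Matrix p p R) = (X + 1 : R[X]) • 1 := by
  rw [← diagonal_one, diagonal_neg, charmatrix_diagonal, smul_one_eq_diagonal]
  simp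

theorem charpoly_fromBlocks_neg_one_of_mul_eq_smul_one (C : Matrix p q R) (D : Matrix q p R)
    (c : R) (hDC : D * C = c • 1) (hqp : Fintype.card q ≤ Fintype.card p) :
    (fromBlocks (-1) C D (-1)).charpoly =
      (X + 1) ^ (Fintype.card p - Fintype.card q) *
        ((X + 1) ^ 2 - Polynomial.C c) ^ Fintype.card q := by
  have key := det_fromBlocks_smul_one_mul_pow (X + 1 : R[X])
    (-C.map Polynomial.C) (-D.map Polynomial.C)
  rw [Matrix.neg_mul, Matrix.mul_neg, neg_neg, ← Matrix.map_mul, hDC,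
    Matrix.map_smul' _ _ _ (map_mul _), Matrix.map_one _ (map_zero _) (map_one _), ← sub_smul,
    det_smul, det_one, mul_one] at key
  rw [charpoly, charmatrix_fromBlocks, charmatrix_neg_one, charmatrix_neg_one]
  have hreg : IsRegular ((X + 1 : R[X]) ^ Fintype.card q) := by
    simpa using (monic_X_add_C (1 : R)).isRegular.pow (Fintype.card q)
  refine hreg.right ?_
  dsimp only
  rw [key, ← pow_sub_mul_pow _ hqp]
  ring

end

theorem card_le_card_of_isUnit_mul {p q K : Type*} [Fintype p] [Fintype q] [DecidableEq q]
    [Field K] (B : Matrix q p K) (E : Matrix p q K) (h : IsUnit (B * E)) :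
    Fintype.card q ≤ Fintype.card p :=
  calc Fintype.card q = (B * E).rank := (rank_of_isUnit _ h).symm
    _ ≤ B.rank := rank_mul_le_left B E
    _ ≤ Fintype.card p := rank_le_card_width B

section

variable {m p q : Type*} [Fintype m] [Fintype p] [Fintype q]

theorem blk3_mul
    (M11 : Matrix m m ℝ) (M12 : Matrix m p ℝ) (M13 : Matrix m q ℝ)
    (M21 : Matrix p m ℝ) (M22 : Matrix p p ℝ) (M23 : Matrix p q ℝ)
    (M31 : Matrix q m ℝ) (M32 : Matrix q p ℝ) (M33 : Matrix q q ℝ)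
    (N11 : Matrix m m ℝ) (N12 : Matrix m p ℝ) (N13 : Matrix m q ℝ)
    (N21 : Matrix p m ℝ) (N22 : Matrix p p ℝ) (N23 : Matrix p q ℝ)
    (N31 : Matrix q m ℝ) (N32 : Matrix q p ℝ) (N33 : Matrix q q ℝ) :
    blk3 M11 M12 M13 M21 M22 M23 M31 M32 M33 * blk3 N11 N12 N13 N21 N22 N23 N31 N32 N33 =
    blk3 (M11 * N11 + M12 * N21 + M13 * N31) (M11 * N12 + M12 * N22 + M13 * N32)
      (M11 * N13 + M12 * N23 + M13 * N33)
      (M21 * N11 + M22 * N21 + M23 * N31) (M21 * N12 + M22 * N22 + M23 * N32)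
      (M21 * N13 + M22 * N23 + M23 * N33)
      (M31 * N11 + M32 * N21 + M33 * N31) (M31 * N12 + M32 * N22 + M33 * N32)
      (M31 * N13 + M32 * N23 + M33 * N33) := by
  ext (i | i | i) (j | j | j) <;>
    simp [blk3, mul_apply, Fintype.sum_sum_type, add_assoc]

variable [DecidableEq m] [DecidableEq p] [DecidableEq q]

theorem isUnit_blk3_lowerTriangular {A : Matrix m m ℝ} {S1 : Matrix p p ℝ} {S2 : Matrix q q ℝ}
    (G : Matrix p m ℝ) (B : Matrix q p ℝ) (hA : IsUnit A) (hS1 : IsUnit S1) (hS2 : IsUnit S2) :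
    IsUnit (blk3 A 0 0 G S1 0 0 B S2) := by
  rw [isUnit_iff_isUnit_det, blk3, fromCols_zero, det_fromBlocks_zero₁₂, det_fromBlocks_zero₁₂]
  exact (isUnit_iff_isUnit_det A).mp hA |>.mul <|
    ((isUnit_iff_isUnit_det S1).mp hS1).mul ((isUnit_iff_isUnit_det S2).mp hS2)

theorem blk3_lowerTriangular_mul_eq {A : Matrix m m ℝ} {As S1 : Matrix p p ℝ}
    {S2 : Matrix q q ℝ} {F : Matrix m p ℝ} {G : Matrix p m ℝ} {B : Matrix q p ℝ}
    {E : Matrix p q ℝ} (hS1def : S1 = As + G * A⁻¹ * F) (hS2def : S2 = B * S1⁻¹ * E)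
    (hA : IsUnit A) (hS1 : IsUnit S1) (hS2 : IsUnit S2) :
    blk3 A 0 0 G S1 0 0 B S2 *
        blk3 1 (A⁻¹ * F) 0 0 (-1) (S1⁻¹ * E) 0 ((2 : ℝ) • (S2⁻¹ * B)) (-1) =
      blk3 A F 0 G (-As) E 0 B 0 := by
  rw [isUnit_iff_isUnit_det] at hA hS1 hS2
  rw [blk3_mul]
  simp only [Matrix.mul_zero, Matrix.zero_mul, Matrix.mul_one, Matrix.mul_neg, add_zero,
    zero_add, ← Matrix.mul_assoc, mul_nonsing_inv _ hA, mul_nonsing_inv _ hS1, Matrix.one_mul,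
    Matrix.mul_smul, mul_nonsing_inv _ hS2, neg_zero, smul_zero]
  congr 1
  · rw [hS1def]; abel
  · rw [two_smul]; abel
  · rw [hS2def]; abel

end

/-- the characteristic polynomial of `M̃₃⁻¹ K` is
`(λ − 1)^m (λ + 1)^(p−q) ((λ + 1)² − 2)^q`. -/
theorem stmt8 (m p q : ℕ)
    (A : Matrix (Fin m) (Fin m) ℝ) (As : Matrix (Fin p) (Fin p) ℝ)
    (G : Matrix (Fin p) (Fin m) ℝ) (B : Matrix (Fin q) (Fin p) ℝ)
    (S1 : Matrix (Fin p) (Fin p) ℝ) (S2 : Matrix (Fin q) (Fin q) ℝ)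
    (hS1def : S1 = As + G * A⁻¹ * Gᵀ) (hS2def : S2 = B * S1⁻¹ * Bᵀ)
    (hA : IsUnit A) (hS1 : IsUnit S1) (hS2 : IsUnit S2)
    (K M3t : Matrix (Fin m ⊕ (Fin p ⊕ Fin q)) (Fin m ⊕ (Fin p ⊕ Fin q)) ℝ)
    (hK : K = blk3 A Gᵀ 0 G (-As) Bᵀ 0 B 0)
    (hM3t : M3t = blk3 A 0 0 G S1 0 0 B S2) :
    (M3t⁻¹ * K).charpoly =
      (X - 1) ^ m * (X + 1) ^ (p - q) * ((X + 1) ^ 2 - 2) ^ q := by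
  have hqp : q ≤ p := by
    simpa using card_le_card_of_isUnit_mul B (S1⁻¹ * Bᵀ) (by rwa [← Matrix.mul_assoc, ← hS2def])
  have hDC : (2 : ℝ) • (S2⁻¹ * B) * (S1⁻¹ * Bᵀ) = (2 : ℝ) • 1 := by
    rw [Matrix.smul_mul, Matrix.mul_assoc, ← Matrix.mul_assoc B, ← hS2def,
      nonsing_inv_mul _ ((isUnit_iff_isUnit_det S2).mp hS2)]
  rw [hK, hM3t, ← blk3_lowerTriangular_mul_eq hS1def hS2def hA hS1 hS2, ← Matrix.mul_assoc,
    nonsing_inv_mul _ ((isUnit_iff_isUnit_det _).mp (isUnit_blk3_lowerTriangular G B hA hS1 hS2)),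
    Matrix.one_mul, blk3, fromRows_zero, charpoly_fromBlocks_zero₂₁, charpoly_one,
    charpoly_fromBlocks_neg_one_of_mul_eq_smul_one _ _ 2 hDC (by simpa using hqp)]
  simp only [Fintype.card_fin, map_ofNat, mul_assoc]
end

section
/- Let A be an invertible m×m real matrix, A_s a p×p real matrix, G a p×m real matrix, B a q×p real matrix, and suppose S₁ = A_s + G A⁻¹ Gᵀ and S₂ = B S₁⁻¹ Bᵀ are invertible. Define M₁ = blockdiag(A, S₁, S₂). Let λ ∈ ℝ satisfy λ² + λ − 1 = 0 (i.e., λ = (−1 ± √5)/2). Then for every nonzero z ∈ ℝ^q with Gᵀ S₁⁻¹ Bᵀ z = 0, the vector (0, (1 + λ)⁻¹ S₁⁻¹ Bᵀ z, z) is an eigenvector of M₁⁻¹K with eigenvalue λ; consequently each of the two eigenvalues (−1 ± √5)/2 of M₁⁻¹K has geometric multiplicity at least dim ker(Gᵀ S₁⁻¹ Bᵀ). -/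
open Matrix

/-!
Put `y = λ S₁⁻¹ Bᵀ z`. The hypothesis on `z` says `Gᵀ y = 0`, which kills the first block row
of `K v` and, through `S₁ = A_s + G A⁻¹ Gᵀ`, gives `A_s y = S₁ y = λ Bᵀ z`. The remaining
block rows of `K v = λ M₁ v` become `(1 - λ) Bᵀ z = λ² Bᵀ z` and `B y = λ S₂ z`, both true because
`λ² + λ = 1`, which also gives `(1 + λ)⁻¹ = λ`. The map `z ↦ (0, (1 + λ)⁻¹ S₁⁻¹ Bᵀ z, z)` is
injective and sends `ker (Gᵀ S₁⁻¹ Bᵀ)` into the `λ`-eigenspace of `M₁⁻¹ K`.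
-/

section Blk3

variable {m p q : Type*} [Fintype m] [Fintype p] [Fintype q]

lemma blk3_mulVec_sumElim
    (M11 : Matrix m m ℝ) (M12 : Matrix m p ℝ) (M13 : Matrix m q ℝ)
    (M21 : Matrix p m ℝ) (M22 : Matrix p p ℝ) (M23 : Matrix p q ℝ)
    (M31 : Matrix q m ℝ) (M32 : Matrix q p ℝ) (M33 : Matrix q q ℝ)
    (x : m → ℝ) (y : p → ℝ) (z : q → ℝ) :
    blk3 M11 M12 M13 M21 M22 M23 M31 M32 M33 *ᵥ Sum.elim x (Sum.elim y z) =
      Sum.elim (M11 *ᵥ x + (M12 *ᵥ y + M13 *ᵥ z))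
        (Sum.elim (M21 *ᵥ x + (M22 *ᵥ y + M23 *ᵥ z))
          (M31 *ᵥ x + (M32 *ᵥ y + M33 *ᵥ z))) := by
  rw [blk3, fromBlocks_mulVec]
  simp only [Sum.elim_comp_inl, Sum.elim_comp_inr, fromCols_mulVec_sumElim, fromRows_mulVec,
    fromBlocks_mulVec, Sum.elim_add_add]

variable [DecidableEq m] [DecidableEq p] [DecidableEq q]

lemma isUnit_blk3_diag {A : Matrix m m ℝ} {B : Matrix p p ℝ} {C : Matrix q q ℝ}
    (hA : IsUnit A) (hB : IsUnit B) (hC : IsUnit C) : IsUnit (blk3 A 0 0 0 B 0 0 0 C) := by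
  rw [isUnit_iff_isUnit_det] at *
  rw [blk3, fromCols_zero, fromRows_zero, det_fromBlocks_zero₂₁, det_fromBlocks_zero₂₁]
  exact hA.mul (hB.mul hC)

end Blk3

lemma Matrix.inv_mul_mulVec_eq_smul_of_mulVec_eq {n : Type*} [Fintype n] [DecidableEq n]
    {M K : Matrix n n ℝ} (hM : IsUnit M) {c : ℝ} {v : n → ℝ} (h : K *ᵥ v = c • M *ᵥ v) :
    (M⁻¹ * K) *ᵥ v = c • v := by
  rw [← mulVec_mulVec, h, mulVec_smul, mulVec_mulVec,
    nonsing_inv_mul M ((isUnit_iff_isUnit_det M).mp hM), one_mulVec]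

lemma LinearMap.finrank_le_finrank_of_injective_of_mapsTo {R V W : Type*} [Ring R]
    [StrongRankCondition R] [AddCommGroup V] [Module R V] [AddCommGroup W] [Module R W]
    {f : V →ₗ[R] W} (hf : Function.Injective f) {U : Submodule R V} {U' : Submodule R W}
    [Module.Finite R U'] (hU : ∀ x ∈ U, f x ∈ U') :
    Module.finrank R U ≤ Module.finrank R U' :=
  LinearMap.finrank_le_finrank_of_injective (f := f.restrict hU)
    fun _ _ h => Subtype.ext (hf (congrArg Subtype.val h))

def graphMap {m p q : Type*} [Fintype q] (P : Matrix p q ℝ) :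
    (q → ℝ) →ₗ[ℝ] (m ⊕ (p ⊕ q) → ℝ) where
  toFun z := Sum.elim 0 (Sum.elim (P *ᵥ z) z)
  map_add' z w := by
    simp only [mulVec_add, ← Sum.elim_add_add, add_zero]
  map_smul' c z := by
    ext (i | i | i) <;> simp [mulVec_smul]

lemma graphMap_apply {m p q : Type*} [Fintype q] (P : Matrix p q ℝ) (z : q → ℝ) :
    graphMap P z = Sum.elim (0 : m → ℝ) (Sum.elim (P *ᵥ z) z) := rfl

lemma graphMap_injective {m p q : Type*} [Fintype q] (P : Matrix p q ℝ) :
    Function.Injective (graphMap (m := m) P) :=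
  fun _ _ h => funext fun i => congrFun h (Sum.inr (Sum.inr i))

lemma inv_one_add_eq_of_sq_add_sub_one_eq_zero {lam : ℝ} (hlam : lam ^ 2 + lam - 1 = 0) :
    (1 + lam)⁻¹ = lam :=
  inv_eq_of_mul_eq_one_right (by linear_combination hlam)

lemma blk3_mulVec_graphMap_eq_smul {m p q : Type*} [Fintype m] [Fintype p] [Fintype q]
    [DecidableEq m] [DecidableEq p]
    {A : Matrix m m ℝ} {As S1 : Matrix p p ℝ} {G : Matrix p m ℝ} {B : Matrix q p ℝ}
    {S2 : Matrix q q ℝ} (hS1def : S1 = As + G * A⁻¹ * Gᵀ) (hS2def : S2 = B * S1⁻¹ * Bᵀ)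
    (hS1 : IsUnit S1) {lam : ℝ} (hlam : lam ^ 2 + lam - 1 = 0) {z : q → ℝ}
    (hz : (Gᵀ * S1⁻¹ * Bᵀ) *ᵥ z = 0) :
    blk3 A Gᵀ 0 G (-As) Bᵀ 0 B 0 *ᵥ graphMap (lam • (S1⁻¹ * Bᵀ)) z =
      lam • (blk3 A 0 0 0 S1 0 0 0 S2 *ᵥ graphMap (lam • (S1⁻¹ * Bᵀ)) z) := by
  rw [graphMap_apply, blk3_mulVec_sumElim, blk3_mulVec_sumElim]
  set y := (lam • (S1⁻¹ * Bᵀ)) *ᵥ z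
  have hGy : Gᵀ *ᵥ y = 0 := by
    rw [mulVec_mulVec, Matrix.mul_smul, ← Matrix.mul_assoc, smul_mulVec, hz, smul_zero]
  have hAsy : As *ᵥ y = S1 *ᵥ y := by
    rw [hS1def, add_mulVec, Matrix.mul_assoc, ← mulVec_mulVec, ← mulVec_mulVec, hGy,
      mulVec_zero, mulVec_zero, add_zero]
  have hS1y : S1 *ᵥ y = lam • Bᵀ *ᵥ z := by
    rw [mulVec_mulVec, Matrix.mul_smul, ← Matrix.mul_assoc,
      mul_nonsing_inv S1 ((isUnit_iff_isUnit_det S1).mp hS1), Matrix.one_mul, smul_mulVec]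
  have hBy : B *ᵥ y = lam • S2 *ᵥ z := by
    rw [mulVec_mulVec, Matrix.mul_smul, ← Matrix.mul_assoc, ← hS2def, smul_mulVec]
  ext (i | i | i)
  · simp [hGy]
  · simp only [Sum.elim_inr, Sum.elim_inl, Pi.smul_apply, Pi.add_apply, neg_mulVec, hAsy, hS1y,
      mulVec_zero, zero_mulVec, zero_add, add_zero, Pi.neg_apply, smul_eq_mul]
    linear_combination (-(Bᵀ *ᵥ z) i) * hlam
  · simp [hBy]

/-- for `λ` with `λ² + λ − 1 = 0` and any nonzero `z` with
`Gᵀ S₁⁻¹ Bᵀ z = 0`, the vector `(0, (1+λ)⁻¹ S₁⁻¹ Bᵀ z, z)` is an eigenvector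
of `M₁⁻¹K` with eigenvalue `λ`; hence the geometric multiplicity of each of
the eigenvalues `(−1 ± √5)/2` is at least `dim ker (Gᵀ S₁⁻¹ Bᵀ)`. -/
theorem stmt11 (m p q : ℕ)
    (A : Matrix (Fin m) (Fin m) ℝ) (As : Matrix (Fin p) (Fin p) ℝ)
    (G : Matrix (Fin p) (Fin m) ℝ) (B : Matrix (Fin q) (Fin p) ℝ)
    (S1 : Matrix (Fin p) (Fin p) ℝ) (S2 : Matrix (Fin q) (Fin q) ℝ)
    (hS1def : S1 = As + G * A⁻¹ * Gᵀ) (hS2def : S2 = B * S1⁻¹ * Bᵀ)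
    (hA : IsUnit A) (hS1 : IsUnit S1) (hS2 : IsUnit S2)
    (K M1 : Matrix (Fin m ⊕ (Fin p ⊕ Fin q)) (Fin m ⊕ (Fin p ⊕ Fin q)) ℝ)
    (hK : K = blk3 A Gᵀ 0 G (-As) Bᵀ 0 B 0)
    (hM1 : M1 = blk3 A 0 0 0 S1 0 0 0 S2)
    (lam : ℝ) (hlam : lam ^ 2 + lam - 1 = 0) :
    (∀ z : Fin q → ℝ, z ≠ 0 → (Gᵀ * S1⁻¹ * Bᵀ) *ᵥ z = 0 →
      ∀ y : Fin p → ℝ, y = (1 + lam)⁻¹ • ((S1⁻¹ * Bᵀ) *ᵥ z) →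
        (M1⁻¹ * K) *ᵥ Sum.elim (0 : Fin m → ℝ) (Sum.elim y z) =
          lam • Sum.elim (0 : Fin m → ℝ) (Sum.elim y z) ∧
        Sum.elim (0 : Fin m → ℝ) (Sum.elim y z) ≠ 0) ∧
    Module.finrank ℝ (LinearMap.ker (Gᵀ * S1⁻¹ * Bᵀ).mulVecLin) ≤
      Module.finrank ℝ (LinearMap.ker (M1⁻¹ * K - lam • 1).mulVecLin) := by
  set P := (1 + lam)⁻¹ • (S1⁻¹ * Bᵀ) with hP
  have hM1unit : IsUnit M1 := hM1 ▸ isUnit_blk3_diag hA hS1 hS2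
  have heig : ∀ z ∈ LinearMap.ker (Gᵀ * S1⁻¹ * Bᵀ).mulVecLin,
      (M1⁻¹ * K) *ᵥ graphMap P z = lam • graphMap P z := fun z hz =>
    inv_mul_mulVec_eq_smul_of_mulVec_eq hM1unit <| by
      rw [hK, hM1, hP, inv_one_add_eq_of_sq_add_sub_one_eq_zero hlam]
      exact blk3_mulVec_graphMap_eq_smul hS1def hS2def hS1 hlam hz
  refine ⟨fun z hz0 hz y hy => ?_, ?_⟩
  · rw [hy, ← smul_mulVec, ← graphMap_apply]
    exact ⟨heig z hz, (map_ne_zero_iff _ (graphMap_injective P)).mpr hz0⟩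
  · refine LinearMap.finrank_le_finrank_of_injective_of_mapsTo (graphMap_injective P) fun z hz => ?_
    rw [LinearMap.mem_ker, mulVecLin_apply, sub_mulVec, heig z hz, smul_mulVec, one_mulVec,
      sub_self]
end
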